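/- Let p be a prime, let d ≥ 1 be an integer, let n_1, …, n_d ∈ ℤ, and let c_1, …, c_d ∈ ℚ_p satisfy ‖c_i‖_p = 1 for all i. Define F(z) = Σ_{0 < m_1 < ⋯ < m_d} (∏_{i=1}^d c_i^{m_i}) · z^{m_d} · ∏_{i=1}^d m_i^{−n_i} and G(z) = Σ_{0 < m_1 < ⋯ < m_d} (∏_{i=1}^d c_i^{m_i}) · z^{m_d} · (∏_{i=1}^{d−1} m_i^{−n_i}) · m_d^{−(n_d − 1)}, both of which are convergent sums in ℚ_p for ‖z‖_p < 1. Then for every z ∈ ℚ_p with ‖z‖_p < 1, F is differentiable at z (in the sense of the p-adic norm on ℚ_p) and z · F′(z) = G(z). -/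

import Mathlib

/-- The localized p-adic multiple polylogarithm series
`F(w) = Σ_{0<m₁<⋯<m_d} (∏ cᵢ^{mᵢ}) · w^{m_d} · ∏ mᵢ^{-nᵢ}` in ℚ_p. -/
noncomputable def locMPLpadic (p : ℕ) [Fact p.Prime] (d : ℕ) (hd : 1 ≤ d)
    (n : Fin d → ℤ) (c : Fin d → ℚ_[p]) (w : ℚ_[p]) : ℚ_[p] :=
  ∑' m : {f : Fin d → ℕ // StrictMono f ∧ ∀ i, 0 < f i},
    (∏ i, c i ^ (m.1 i)) * w ^ (m.1 ⟨d - 1, by omega⟩) *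
      ∏ i, ((m.1 i : ℚ_[p])) ^ (-(n i))

/-- The series `G(w)` obtained from `F` by lowering the last exponent `n_d` by one. -/
noncomputable def locMPLpadicLowered (p : ℕ) [Fact p.Prime] (d : ℕ) (hd : 1 ≤ d)
    (n : Fin d → ℤ) (c : Fin d → ℚ_[p]) (w : ℚ_[p]) : ℚ_[p] :=
  ∑' m : {f : Fin d → ℕ // StrictMono f ∧ ∀ i, 0 < f i},
    (∏ i, c i ^ (m.1 i)) * w ^ (m.1 ⟨d - 1, by omega⟩) *
      (∏ i ∈ Finset.univ.erase ⟨d - 1, by omega⟩, ((m.1 i : ℚ_[p])) ^ (-(n i))) *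
      ((m.1 ⟨d - 1, by omega⟩ : ℚ_[p])) ^ (-(n ⟨d - 1, by omega⟩ - 1))

open Filter


lemma aux_one_le_mul_norm (p : ℕ) [Fact p.Prime] {m : ℕ} (hm : 0 < m) :
    1 ≤ (m : ℝ) * ‖(m : ℚ_[p])‖ := by
  have h1 : ((m : ℚ) : ℚ_[p]) = (m : ℚ_[p]) := by push_cast; ring
  have h2 : ‖(m : ℚ_[p])‖ = (padicNorm p m : ℝ) := by
    rw [← h1, Padic.eq_padicNorm]
  have hm0 : (m : ℚ) ≠ 0 := by exact_mod_cast hm.ne'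
  rw [h2, padicNorm.eq_zpow_of_nonzero hm0, padicValRat.of_nat]
  set v := padicValNat p m
  have hple : (p : ℝ) ^ v ≤ (m : ℝ) := by
    exact_mod_cast Nat.le_of_dvd hm pow_padicValNat_dvd
  have hp1 : (1:ℝ) ≤ (p:ℝ) := by
    have := (Fact.out : p.Prime).one_lt
    exact_mod_cast this.le
  have hppos : (0:ℝ) < (p:ℝ) ^ v := by positivity
  have : ((((p:ℚ)) ^ (-(v:ℤ)) : ℚ) : ℝ) = ((p:ℝ) ^ v)⁻¹ := by
    push_cast
    rw [zpow_neg, zpow_natCast]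
  rw [this, ← div_eq_mul_inv, le_div_iff₀ hppos, one_mul]
  exact hple

lemma aux_zpow_le {t M : ℝ} (ht0 : 0 < t) (ht1 : t ≤ 1) (hM : 1 ≤ M)
    (hMt : 1 ≤ M * t) (ni : ℤ) : t ^ (-ni) ≤ M ^ ni.toNat := by
  rcases le_or_gt 0 ni with h | h
  · have hni : ni = (ni.toNat : ℤ) := (Int.toNat_of_nonneg h).symm
    rw [hni, zpow_neg, ← inv_zpow, zpow_natCast]
    apply pow_le_pow_left₀ (by positivity)
    have hMpos : (0:ℝ) < M := by linarith
    rw [inv_le_comm₀ ht0 hMpos]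
    nlinarith [mul_inv_cancel₀ (ne_of_gt hMpos)]
  · have h0 : ni.toNat = 0 := Int.toNat_of_nonpos h.le
    rw [h0, pow_zero]
    have hni : -ni = ((-ni).toNat : ℤ) := (Int.toNat_of_nonneg (by omega)).symm
    rw [hni, zpow_natCast]
    exact pow_le_one₀ ht0.le ht1

lemma aux_norm_coeff (p : ℕ) [Fact p.Prime] (d : ℕ) (hd : 1 ≤ d)
    (n : Fin d → ℤ) (c : Fin d → ℚ_[p]) (hc : ∀ i, ‖c i‖ = 1)
    (m : {f : Fin d → ℕ // StrictMono f ∧ ∀ i, 0 < f i}) :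
    ‖(∏ i, c i ^ (m.1 i)) * ∏ i, ((m.1 i : ℚ_[p])) ^ (-(n i))‖ ≤
      (m.1 ⟨d - 1, by omega⟩ : ℝ) ^ (∑ i, (n i).toNat) := by
  set K : ℕ := m.1 ⟨d - 1, by omega⟩ with hK
  have hKpos : 0 < K := m.2.2 _
  have hK1 : (1:ℝ) ≤ (K:ℝ) := by exact_mod_cast hKpos
  have hle : ∀ i, m.1 i ≤ K := by
    intro i
    exact m.2.1.monotone (by rw [Fin.le_def]; simp; omega)
  rw [norm_mul, norm_prod, norm_prod]
  have h1 : ∏ i, ‖c i ^ (m.1 i)‖ = 1 := by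
    apply Finset.prod_eq_one
    intro i _
    rw [norm_pow, hc i, one_pow]
  rw [h1, one_mul]
  calc ∏ i, ‖((m.1 i : ℚ_[p])) ^ (-(n i))‖
      ≤ ∏ i, (K:ℝ) ^ (n i).toNat := by
        apply Finset.prod_le_prod (fun i _ => norm_nonneg _)
        intro i _
        have hmi : 0 < m.1 i := m.2.2 i
        have hne : ((m.1 i : ℚ_[p])) ≠ 0 := by
          exact_mod_cast hmi.ne'
        rw [norm_zpow]
        apply aux_zpow_le (norm_pos_iff.2 hne) ?_ hK1 ?_
        · have : ((m.1 i : ℚ_[p])) = (((m.1 i : ℤ)) : ℚ_[p]) := by push_cast; ring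
          rw [this]; exact Padic.norm_int_le_one _
        · calc (1:ℝ) ≤ (m.1 i : ℝ) * ‖(m.1 i : ℚ_[p])‖ := aux_one_le_mul_norm p hmi
          _ ≤ (K:ℝ) * ‖(m.1 i : ℚ_[p])‖ := by
              apply mul_le_mul_of_nonneg_right _ (norm_nonneg _)
              exact_mod_cast hle i
    _ = (K:ℝ) ^ (∑ i, (n i).toNat) := by
        rw [Finset.prod_pow_eq_pow_sum]


lemma aux_finite (d : ℕ) (hd : 1 ≤ d) (K : ℕ) :
    {m : {f : Fin d → ℕ // StrictMono f ∧ ∀ i, 0 < f i} |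
      m.1 ⟨d - 1, by omega⟩ < K}.Finite := by
  have hsub : {m : {f : Fin d → ℕ // StrictMono f ∧ ∀ i, 0 < f i} |
      m.1 ⟨d - 1, by omega⟩ < K} ⊆
      Subtype.val ⁻¹' (Set.pi Set.univ (fun _ : Fin d => Set.Iio K)) := by
    intro m hm
    simp only [Set.mem_preimage, Set.mem_pi, Set.mem_univ, Set.mem_Iio, forall_true_left]
    intro i
    have : m.1 i ≤ m.1 ⟨d - 1, by omega⟩ :=
      m.2.1.monotone (by rw [Fin.le_def]; simp; omega)
    exact lt_of_le_of_lt this hm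
  exact Set.Finite.subset (Set.Finite.preimage (Subtype.val_injective.injOn)
    (Set.Finite.pi (fun _ => Set.finite_Iio K))) hsub

lemma aux_summable (p : ℕ) [Fact p.Prime] (d : ℕ) (hd : 1 ≤ d)
    (N : ℕ) {r C : ℝ} (hr0 : 0 < r) (hr1 : r < 1) (hC : 0 ≤ C)
    (g : {f : Fin d → ℕ // StrictMono f ∧ ∀ i, 0 < f i} → ℚ_[p])
    (hg : ∀ m, ‖g m‖ ≤ C * (m.1 ⟨d - 1, by omega⟩ : ℝ) ^ N * r ^ (m.1 ⟨d - 1, by omega⟩)) :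
    Summable g := by
  apply NonarchimedeanAddGroup.summable_of_tendsto_cofinite_zero
  rw [tendsto_zero_iff_norm_tendsto_zero]
  have hcomp : Tendsto (fun m : {f : Fin d → ℕ // StrictMono f ∧ ∀ i, 0 < f i} =>
      C * (m.1 ⟨d - 1, by omega⟩ : ℝ) ^ N * r ^ (m.1 ⟨d - 1, by omega⟩)) cofinite (nhds 0) := by
    have h1 : Tendsto (fun j : ℕ => C * (j : ℝ) ^ N * r ^ j) atTop (nhds 0) := by
      have := (tendsto_pow_const_mul_const_pow_of_lt_one N hr0.le hr1).const_mul C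
      simpa [mul_assoc, mul_zero] using this
    have h2 : Tendsto (fun m : {f : Fin d → ℕ // StrictMono f ∧ ∀ i, 0 < f i} =>
        m.1 ⟨d - 1, by omega⟩) cofinite atTop := by
      rw [tendsto_atTop]
      intro K
      rw [eventually_cofinite]
      exact Set.Finite.subset (aux_finite d hd K) (by intro m hm; simpa using hm)
    exact h1.comp h2
  apply squeeze_zero (fun m => norm_nonneg _) hg hcomp


lemma aux_binom (p : ℕ) [Fact p.Prime] (w z : ℚ_[p]) {r : ℝ} (hr0 : 0 ≤ r)
    (hz : ‖z‖ ≤ r) (hh : ‖w - z‖ ≤ r) {k : ℕ} (hk : 2 ≤ k) :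
    ‖w ^ k - z ^ k - (k : ℚ_[p]) * z ^ (k - 1) * (w - z)‖ ≤ ‖w - z‖ ^ 2 * r ^ (k - 2) := by
  obtain ⟨j, rfl⟩ : ∃ j, k = j + 2 := ⟨k - 2, by omega⟩
  set h : ℚ_[p] := w - z with hdef
  have hw : w = z + h := by rw [hdef]; ring
  have expand : w ^ (j + 2) = ∑ i ∈ Finset.range ((j + 2) + 1), z ^ i * h ^ (j + 2 - i) * ((j+2).choose i : ℚ_[p]) := by
    rw [hw, add_pow]
  have e1 : w ^ (j + 2) - z ^ (j + 2) - ((j + 2 : ℕ) : ℚ_[p]) * z ^ (j + 2 - 1) * h =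
      ∑ i ∈ Finset.range (j + 1), z ^ i * h ^ (j + 2 - i) * ((j+2).choose i : ℚ_[p]) := by
    rw [expand, Finset.sum_range_succ, Finset.sum_range_succ]
    have c1 : (j + 2).choose (j + 2) = 1 := Nat.choose_self _
    have c2 : (j + 2).choose (j + 1) = j + 2 := by
      simpa using Nat.choose_succ_self_right (j + 1)
    rw [c1, c2]
    push_cast
    ring_nf
    simp [pow_succ]
    ring
  rw [e1]
  apply IsUltrametricDist.norm_sum_le_of_forall_le_of_nonneg (by positivity)
  intro i hi
  rw [Finset.mem_range] at hi
  have hi' : i ≤ j := by omega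
  have hsplit : j + 2 - i = 2 + (j - i) := by omega
  rw [norm_mul, norm_mul, norm_pow, norm_pow, hsplit, pow_add]
  have hC : ‖(((j+2).choose i : ℕ) : ℚ_[p])‖ ≤ 1 := by
    have : ((((j+2).choose i : ℕ)) : ℚ_[p]) = ((((j+2).choose i : ℤ)) : ℚ_[p]) := by push_cast; ring
    rw [this]; exact Padic.norm_int_le_one _
  calc ‖z‖ ^ i * (‖h‖ ^ 2 * ‖h‖ ^ (j - i)) * ‖(((j+2).choose i : ℕ) : ℚ_[p])‖
      ≤ r ^ i * (‖h‖ ^ 2 * r ^ (j - i)) * 1 := by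
        apply mul_le_mul _ hC (norm_nonneg _) (by positivity)
        apply mul_le_mul (pow_le_pow_left₀ (norm_nonneg _) hz i) _ (by positivity) (by positivity)
        exact mul_le_mul_of_nonneg_left (pow_le_pow_left₀ (norm_nonneg _) hh _) (by positivity)
    _ = ‖h‖ ^ 2 * (r ^ i * r ^ (j - i)) := by ring
    _ = ‖h‖ ^ 2 * r ^ j := by rw [← pow_add]; congr 2; omega

set_option maxHeartbeats 1000000 in
/-- the operator `z·d/dz` lowers the last exponent of a localized
p-adic multiple polylogarithm by one. -/
theorem zDeriv_locMPL_padic (p : ℕ) [Fact p.Prime] (d : ℕ) (hd : 1 ≤ d)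
    (n : Fin d → ℤ) (c : Fin d → ℚ_[p]) (hc : ∀ i, ‖c i‖ = 1) :
    ∀ z : ℚ_[p], ‖z‖ < 1 →
      DifferentiableAt ℚ_[p] (locMPLpadic p d hd n c) z ∧
      z * deriv (locMPLpadic p d hd n c) z = locMPLpadicLowered p d hd n c z := by
  intro z hz
  set N : ℕ := ∑ i, (n i).toNat with hN
  set r : ℝ := max ‖z‖ (1/2) with hrdef
  have hr0 : 0 < r := lt_of_lt_of_le (by norm_num) (le_max_right _ _)
  have hr1 : r < 1 := max_lt hz (by norm_num)
  have hzr : ‖z‖ ≤ r := le_max_left _ _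
  set ks : {f : Fin d → ℕ // StrictMono f ∧ ∀ i, 0 < f i} → ℕ :=
    fun m => m.1 ⟨d - 1, by omega⟩ with hks
  set a : {f : Fin d → ℕ // StrictMono f ∧ ∀ i, 0 < f i} → ℚ_[p] :=
    fun m => (∏ i, c i ^ (m.1 i)) * ∏ i, ((m.1 i : ℚ_[p])) ^ (-(n i)) with ha
  have hk1 : ∀ m, 1 ≤ ks m := fun m => m.2.2 _
  have hknorm : ∀ m, ‖((ks m : ℕ) : ℚ_[p])‖ ≤ 1 := by
    intro m
    have : (((ks m : ℕ)) : ℚ_[p]) = (((ks m : ℤ)) : ℚ_[p]) := by push_cast; ring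
    rw [this]; exact Padic.norm_int_le_one _
  have hnorm : ∀ m, ‖a m‖ ≤ (ks m : ℝ) ^ N := fun m => aux_norm_coeff p d hd n c hc m
  have hFa : locMPLpadic p d hd n c = fun w => ∑' m, a m * w ^ ks m := by
    funext w; unfold locMPLpadic; exact tsum_congr fun m => by rw [ha, hks]; ring
  -- summability
  have hsum : ∀ w : ℚ_[p], ‖w‖ ≤ r → Summable (fun m => a m * w ^ ks m) := by
    intro w hw
    apply aux_summable p d hd N hr0 hr1 (zero_le_one) _ ?_
    intro m
    rw [norm_mul, norm_pow, one_mul]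
    exact mul_le_mul (hnorm m) (pow_le_pow_left₀ (norm_nonneg w) hw _)
      (by positivity) (by positivity)
  have hsumL : Summable (fun m => a m * ((ks m : ℕ) : ℚ_[p]) * z ^ (ks m - 1)) := by
    apply aux_summable p d hd N hr0 hr1 (C := 1/r) (by positivity) _ ?_
    intro m
    have heq : (1/r) * ((ks m : ℝ) ^ N) * r ^ (ks m) = (ks m : ℝ) ^ N * r ^ (ks m - 1) := by
      have hkm1 := hk1 m
      have h2 : r ^ (ks m - 1) * r = r ^ (ks m) := by
        rw [← pow_succ]; congr 1; omega
      field_simp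
      rw [← h2]; ring
    rw [heq, norm_mul, norm_mul, norm_pow]
    calc ‖a m‖ * ‖((ks m : ℕ) : ℚ_[p])‖ * ‖z‖ ^ (ks m - 1)
        ≤ (ks m : ℝ) ^ N * 1 * r ^ (ks m - 1) := by
          apply mul_le_mul _ (pow_le_pow_left₀ (norm_nonneg z) hzr _) (by positivity) (by positivity)
          exact mul_le_mul (hnorm m) (hknorm m) (norm_nonneg _) (by positivity)
      _ = (ks m : ℝ) ^ N * r ^ (ks m - 1) := by ring
  set L : ℚ_[p] := ∑' m, a m * ((ks m : ℕ) : ℚ_[p]) * z ^ (ks m - 1) with hL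
  -- bounding constant
  obtain ⟨C0, hC0⟩ : ∃ C0 : ℝ, ∀ j : ℕ, (j : ℝ) ^ N * r ^ j ≤ C0 := by
    obtain ⟨C0, hC0⟩ := (tendsto_pow_const_mul_const_pow_of_lt_one N hr0.le hr1).bddAbove_range
    exact ⟨C0, fun j => hC0 (Set.mem_range_self j)⟩
  have hC0pos : 0 < C0 := by
    have h1 := hC0 1
    norm_num at h1
    linarith
  set M : ℝ := C0 / r ^ 2 with hM
  have hMpos : 0 < M := by positivity
  have hderiv : HasDerivAt (fun w => ∑' m, a m * w ^ ks m) L z := by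
    rw [hasDerivAt_iff_isLittleO, Asymptotics.isLittleO_iff]
    intro ε hε
    rw [Metric.eventually_nhds_iff]
    refine ⟨min r (ε / M), by positivity, ?_⟩
    intro w hwz
    rw [dist_eq_norm] at hwz
    have hh_r : ‖w - z‖ ≤ r := le_of_lt (lt_of_lt_of_le hwz (min_le_left _ _))
    have hh_c : ‖w - z‖ ≤ ε / M := le_of_lt (lt_of_lt_of_le hwz (min_le_right _ _))
    have hwr : ‖w‖ ≤ r := by
      have : w = z + (w - z) := by ring
      rw [this]
      exact le_trans (IsUltrametricDist.norm_add_le_max _ _) (max_le hzr hh_r)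
    have hS1 := hsum w hwr
    have hS2 := hsum z hzr
    have key : (∑' m, a m * w ^ ks m) - (∑' m, a m * z ^ ks m) - (w - z) • L =
        ∑' m, a m * (w ^ ks m - z ^ ks m - ((ks m : ℕ) : ℚ_[p]) * z ^ (ks m - 1) * (w - z)) := by
      rw [smul_eq_mul, hL, ← tsum_mul_left, ← Summable.tsum_sub hS1 hS2,
        ← Summable.tsum_sub (hS1.sub hS2) (hsumL.mul_left (w - z))]
      exact tsum_congr fun m => by ring
    simp only [key]
    have hbound : ∀ m, ‖a m * (w ^ ks m - z ^ ks m - ((ks m : ℕ) : ℚ_[p]) * z ^ (ks m - 1) * (w - z))‖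
        ≤ M * ‖w - z‖ ^ 2 := by
      intro m
      rcases Nat.lt_or_ge (ks m) 2 with h2 | h2
      · have hk : ks m = 1 := by have := hk1 m; omega
        have : w ^ ks m - z ^ ks m - ((ks m : ℕ) : ℚ_[p]) * z ^ (ks m - 1) * (w - z) = 0 := by
          rw [hk]; push_cast; ring
        rw [this, mul_zero, norm_zero]
        positivity
      · rw [norm_mul]
        calc ‖a m‖ * ‖w ^ ks m - z ^ ks m - ((ks m : ℕ) : ℚ_[p]) * z ^ (ks m - 1) * (w - z)‖
            ≤ (ks m : ℝ) ^ N * (‖w - z‖ ^ 2 * r ^ (ks m - 2)) := by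
              apply mul_le_mul (hnorm m) (aux_binom p w z hr0.le hzr hh_r h2)
                (norm_nonneg _) (by positivity)
          _ = ((ks m : ℝ) ^ N * r ^ ks m) / r ^ 2 * ‖w - z‖ ^ 2 := by
              have : r ^ (ks m - 2) * r ^ 2 = r ^ ks m := by
                rw [← pow_add]; congr 1; omega
              field_simp
              rw [← this]; ring
          _ ≤ M * ‖w - z‖ ^ 2 := by
              apply mul_le_mul_of_nonneg_right _ (by positivity)
              rw [hM]
              exact div_le_div_of_nonneg_right (hC0 (ks m)) (by positivity) |>.trans_eq rfl
      
    calc ‖∑' m, a m * (w ^ ks m - z ^ ks m - ((ks m : ℕ) : ℚ_[p]) * z ^ (ks m - 1) * (w - z))‖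
        ≤ M * ‖w - z‖ ^ 2 :=
          IsUltrametricDist.norm_tsum_le_of_forall_le_of_nonneg (by positivity) hbound
      _ ≤ ε * ‖w - z‖ := by
          rw [sq]
          rw [← mul_assoc]
          apply mul_le_mul_of_nonneg_right _ (norm_nonneg _)
          calc M * ‖w - z‖ ≤ M * (ε / M) := mul_le_mul_of_nonneg_left hh_c hMpos.le
            _ = ε := by field_simp
  have hF : HasDerivAt (locMPLpadic p d hd n c) L z := by rw [hFa]; exact hderiv
  refine ⟨hF.differentiableAt, ?_⟩
  rw [hF.deriv, hL, ← tsum_mul_left]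
  unfold locMPLpadicLowered
  apply tsum_congr
  intro m
  have hkm : 1 ≤ m.1 (⟨d - 1, by omega⟩ : Fin d) := m.2.2 _
  have hne : ((m.1 (⟨d - 1, by omega⟩ : Fin d)) : ℚ_[p]) ≠ 0 := by
    exact Nat.cast_ne_zero.mpr (by omega)
  have hzp : ((m.1 (⟨d - 1, by omega⟩ : Fin d)) : ℚ_[p]) ^ (-(n (⟨d - 1, by omega⟩ : Fin d) - 1)) =
      ((m.1 (⟨d - 1, by omega⟩ : Fin d)) : ℚ_[p]) *
        ((m.1 (⟨d - 1, by omega⟩ : Fin d)) : ℚ_[p]) ^ (-(n (⟨d - 1, by omega⟩ : Fin d))) := by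
    rw [show -(n (⟨d - 1, by omega⟩ : Fin d) - 1) = 1 + (-(n (⟨d - 1, by omega⟩ : Fin d))) by ring,
      zpow_add₀ hne, zpow_one]
  have hprod : (∏ i, ((m.1 i : ℚ_[p])) ^ (-(n i))) =
      ((m.1 (⟨d - 1, by omega⟩ : Fin d)) : ℚ_[p]) ^ (-(n (⟨d - 1, by omega⟩ : Fin d))) *
        ∏ i ∈ Finset.univ.erase (⟨d - 1, by omega⟩ : Fin d), ((m.1 i : ℚ_[p])) ^ (-(n i)) :=
    (Finset.mul_prod_erase _ _ (Finset.mem_univ _)).symm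
  have hz2 : z ^ (m.1 (⟨d - 1, by omega⟩ : Fin d)) = z * z ^ (m.1 (⟨d - 1, by omega⟩ : Fin d) - 1) := by
    rw [← pow_succ']
    congr 1
    omega
  show z * (((∏ i, c i ^ (m.1 i)) * ∏ i, ((m.1 i : ℚ_[p])) ^ (-(n i))) *
      ((m.1 (⟨d - 1, by omega⟩ : Fin d)) : ℚ_[p]) * z ^ (m.1 (⟨d - 1, by omega⟩ : Fin d) - 1)) =
    (∏ i, c i ^ (m.1 i)) * z ^ (m.1 (⟨d - 1, by omega⟩ : Fin d)) *
      (∏ i ∈ Finset.univ.erase (⟨d - 1, by omega⟩ : Fin d), ((m.1 i : ℚ_[p])) ^ (-(n i))) *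
      ((m.1 (⟨d - 1, by omega⟩ : Fin d)) : ℚ_[p]) ^ (-(n (⟨d - 1, by omega⟩ : Fin d) - 1))
  rw [hzp, hprod, hz2]
  ring
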